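/- arXiv:math/0105253 — 4 statements merged into one kernel-verified Lean document; each statement's English description precedes it below -/
import Mathlib

section
/- Define Λ_N to be the associative unital algebra over a field k of characteristic zero generated by elements e_{(ij)} for unordered pairs {i,j} ⊆ {1,...,N}, i≠j, subject to: e_{(ij)}² = 0; e_{(ij)}e_{(km)} + e_{(km)}e_{(ij)} = 0 for {i,j} ∩ {k,m} = ∅; and e_{(ij)}e_{(jk)} + e_{(jk)}e_{(ik)} + e_{(ik)}e_{(ij)} = 0 for i,j,k distinct. Then for i ≠ j the elements θ_i = Σ_{j≠i} e_{(ij)} satisfy θ_i θ_j + θ_j θ_i = 0. -/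
open Finset

/-- In the quadratic exterior algebra `Λ_N` of the 2-cycle calculus on `S_N`
(stated universally: in any algebra with symmetric elements `e i j = e j i`
satisfying the defining relations of `Λ_N`), the elements
`θ_i = Σ_{j≠i} e_{(ij)}` satisfy `θ_i θ_j + θ_j θ_i = 0` for `i ≠ j`. -/
theorem stmt_3 {k : Type*} [Field k] [CharZero k] {A : Type*} [Ring A] [Algebra k A]
    (N : ℕ) (e : Fin N → Fin N → A)
    (hsym : ∀ i j, e i j = e j i)
    (hsq : ∀ i j, i ≠ j → e i j * e i j = 0)
    (hdisj : ∀ i j p q : Fin N, i ≠ j → p ≠ q → i ≠ p → i ≠ q → j ≠ p → j ≠ q →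
      e i j * e p q + e p q * e i j = 0)
    (htri : ∀ i j p : Fin N, i ≠ j → j ≠ p → i ≠ p →
      e i j * e j p + e j p * e i p + e i p * e i j = 0)
    (θ : Fin N → A) (hθ : ∀ i, θ i = ∑ j ∈ univ.filter (fun j => j ≠ i), e i j) :
    ∀ i j, i ≠ j → θ i * θ j + θ j * θ i = 0 := by
  intro i j hij
  classical
  set T := univ.filter (fun c : Fin N => c ≠ i ∧ c ≠ j) with hT
  have hjT : j ∉ T := by simp [hT]
  have hiT : i ∉ T := by simp [hT]
  have hmemT : ∀ c, c ∈ T → c ≠ i ∧ c ≠ j := by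
    intro c hc
    simpa [hT] using hc
  have hθi : θ i = e i j + ∑ c ∈ T, e i c := by
    have hsplit : (univ.filter (fun c : Fin N => c ≠ i)) = insert j T := by
      ext c
      simp only [hT, Finset.mem_filter, Finset.mem_univ, true_and, Finset.mem_insert]
      constructor
      · intro h
        by_cases hc : c = j
        · exact Or.inl hc
        · exact Or.inr ⟨h, hc⟩
      · rintro (rfl | ⟨h, _⟩)
        · exact hij.symm
        · exact h
    rw [hθ i, hsplit, Finset.sum_insert hjT]
  have hθj : θ j = e i j + ∑ c ∈ T, e j c := by
    have hsplit : (univ.filter (fun c : Fin N => c ≠ j)) = insert i T := by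
      ext c
      simp only [hT, Finset.mem_filter, Finset.mem_univ, true_and, Finset.mem_insert]
      constructor
      · intro h
        by_cases hc : c = i
        · exact Or.inl hc
        · exact Or.inr ⟨hc, h⟩
      · rintro (rfl | ⟨_, h⟩)
        · exact hij
        · exact h
    rw [hθ j, hsplit, Finset.sum_insert hiT, hsym j i]
  set u := e i j with hu
  set P := ∑ c ∈ T, e i c with hP
  set Q := ∑ c ∈ T, e j c with hQ
  rw [hθi, hθj]
  have expand : (u + P) * (u + Q) + (u + Q) * (u + P)
      = (u * u + u * u) + ((u * Q + Q * u) + ((u * P + P * u) + (P * Q + Q * P))) := by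
    noncomm_ring
  rw [expand, hsq i j hij, add_zero, zero_add]
  have hPQ : P * Q + Q * P
      = ∑ c ∈ T, (e i c * e j c + e j c * e i c) := by
    have h1 : P * Q = ∑ c ∈ T, ∑ d ∈ T, e i c * e j d := by
      rw [hP, hQ, Finset.sum_mul_sum]
    have h2 : Q * P = ∑ c ∈ T, ∑ d ∈ T, e j d * e i c := by
      rw [hP, hQ, Finset.sum_mul_sum, Finset.sum_comm]
    rw [h1, h2, ← Finset.sum_add_distrib]
    refine Finset.sum_congr rfl fun c hc => ?_
    rw [← Finset.sum_add_distrib]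
    refine Finset.sum_eq_single c (fun d hd hdc => ?_) (fun h => absurd hc h)
    obtain ⟨hci, hcj⟩ := hmemT c hc
    obtain ⟨hdi, hdj⟩ := hmemT d hd
    exact hdisj i c j d hci.symm hdj.symm hij hdi.symm hcj (Ne.symm hdc)
  have huQ : u * Q + Q * u = ∑ c ∈ T, (u * e j c + e j c * u) := by
    rw [hQ, Finset.mul_sum, Finset.sum_mul, ← Finset.sum_add_distrib]
  have huP : u * P + P * u = ∑ c ∈ T, (u * e i c + e i c * u) := by
    rw [hP, Finset.mul_sum, Finset.sum_mul, ← Finset.sum_add_distrib]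
  rw [hPQ, huQ, huP, ← Finset.sum_add_distrib, ← Finset.sum_add_distrib]
  refine Finset.sum_eq_zero fun c hc => ?_
  obtain ⟨hci, hcj⟩ := hmemT c hc
  have t1 := htri i j c hij hcj.symm hci.symm
  have t2 := htri j i c hij.symm hci.symm hcj.symm
  rw [hsym j i] at t2
  have key : u * e j c + e j c * u + (u * e i c + e i c * u + (e i c * e j c + e j c * e i c))
      = (e i j * e j c + e j c * e i c + e i c * e i j)
        + (e i j * e i c + e i c * e j c + e j c * e i j) := by
    rw [hu]; abel
  rw [key, t1, t2, add_zero]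
end

section
/- Let C be the set of transpositions in S_N (N ≥ 3) and let X ⊆ C be closed under conjugation by its own elements (aXa⁻¹ = X for all a ∈ X) with |X| ≥ (N−1)(N−2)/2. Then either X = C, or there exists i ∈ {1,...,N} such that X = {(jk) ∈ C : i ∉ {j,k}} (so |X| = (N−1)(N−2)/2). -/
/-!
Conjugation closure says that `swap a b, swap b c ∈ X` force
`swap a c = swap a b * swap b c * (swap a b)⁻¹ ∈ X`, so the graph with an edge `ab` for each
`swap a b ∈ X` is a disjoint union of cliques, and `|X|` is its number of edges. By the handshake
lemma, `|X| ≥ C(N - 1, 2)` gives a vertex `i` of degree at least `N - 2`. If `i` is adjacent to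
every other vertex, transitivity makes the graph complete; otherwise `i` misses exactly one
vertex `m`, and transitivity makes `m` isolated and the remaining vertices a clique, so `X`
consists of the swaps fixing `m`.
-/

open Equiv Finset Fintype

namespace SimpleGraph

variable {V : Type*} {G : SimpleGraph V}

theorem eq_top_of_forall_adj
    (hG : ∀ ⦃a b c⦄, G.Adj a b → G.Adj b c → a ≠ c → G.Adj a c) {i : V}
    (hi : ∀ j, j ≠ i → G.Adj i j) : G = ⊤ := by
  ext a b
  refine ⟨G.ne_of_adj, fun hab => ?_⟩
  rcases eq_or_ne a i with rfl | hai
  · exact hi b (Ne.symm hab)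
  rcases eq_or_ne b i with rfl | hbi
  · exact (hi a hai).symm
  · exact hG (hi a hai).symm (hi b hbi) hab

theorem adj_iff_of_forall_adj_of_not_adj
    (hG : ∀ ⦃a b c⦄, G.Adj a b → G.Adj b c → a ≠ c → G.Adj a c) {i m : V}
    (hmi : m ≠ i) (him : ¬G.Adj i m) (hi : ∀ j, j ≠ i → j ≠ m → G.Adj i j) (a b : V) :
    G.Adj a b ↔ a ≠ b ∧ a ≠ m ∧ b ≠ m := by
  have hm : ∀ c, ¬G.Adj m c := by
    intro c hmc
    rcases eq_or_ne c i with rfl | hci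
    · exact him hmc.symm
    · exact him (hG (hi c hci hmc.ne.symm) hmc.symm hmi.symm)
  refine ⟨fun hab => ⟨hab.ne, ?_, ?_⟩, fun ⟨hab, ham, hbm⟩ => ?_⟩
  · rintro rfl; exact hm b hab
  · rintro rfl; exact hm a hab.symm
  rcases eq_or_ne a i with rfl | hai
  · exact hi b (Ne.symm hab) hbm
  rcases eq_or_ne b i with rfl | hbi
  · exact (hi a hai ham).symm
  · exact hG (hi a hai ham).symm (hi b hbi hbm) hab

variable [Fintype V] [DecidableRel G.Adj]

theorem exists_card_sub_two_le_degree [Nonempty V]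
    (h : (card V - 1).choose 2 ≤ #G.edgeFinset) : ∃ i, card V - 2 ≤ G.degree i := by
  obtain ⟨i, hi⟩ := G.exists_maximal_degree_vertex
  refine ⟨i, not_lt.1 fun hlt => ?_⟩
  have hsum : 2 * #G.edgeFinset ≤ card V * (card V - 3) := by
    rw [← sum_degrees_eq_twice_card_edges]
    calc ∑ v, G.degree v ≤ ∑ _v : V, (card V - 3) :=
          sum_le_sum fun v _ => by have := G.degree_le_maxDegree v; omega
      _ = card V * (card V - 3) := by simp
  have hchoose : 2 * (card V - 1).choose 2 = (card V - 1) * (card V - 2) := by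
    rw [Nat.choose_two_right, Nat.mul_div_cancel' (Nat.even_mul_pred_self _).two_dvd]; rfl
  obtain ⟨k, hk⟩ : ∃ k, card V = k + 3 := ⟨card V - 3, by omega⟩
  rw [hk] at hsum hchoose h
  simp only [Nat.add_sub_cancel, show k + 3 - 1 = k + 2 by omega,
    show k + 3 - 2 = k + 1 by omega] at hsum hchoose h
  nlinarith

variable [DecidableEq V]

theorem forall_adj_of_card_sub_two_le_degree {i m : V} (hmi : m ≠ i) (him : ¬G.Adj i m)
    (hdeg : card V - 2 ≤ G.degree i) (j : V) (hji : j ≠ i) (hjm : j ≠ m) : G.Adj i j := by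
  have hsub : G.neighborFinset i ⊆ {i, m}ᶜ := by
    intro k hk
    simp only [mem_neighborFinset] at hk
    simp only [mem_compl, mem_insert, mem_singleton, not_or]
    exact ⟨hk.ne.symm, fun h => him (h ▸ hk)⟩
  have heq := eq_of_subset_of_card_le hsub (by
    rwa [card_compl, card_pair hmi.symm, card_neighborFinset_eq_degree])
  have : j ∈ ({i, m}ᶜ : Finset V) := by simp [hji, hjm]
  rwa [← heq, mem_neighborFinset] at this

theorem eq_top_or_exists_adj_iff
    (hG : ∀ ⦃a b c⦄, G.Adj a b → G.Adj b c → a ≠ c → G.Adj a c)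
    (h : (card V - 1).choose 2 ≤ #G.edgeFinset) :
    G = ⊤ ∨ ∃ m, ∀ a b, G.Adj a b ↔ a ≠ b ∧ a ≠ m ∧ b ≠ m := by
  rcases isEmpty_or_nonempty V with hV | hV
  · left; ext a; exact isEmptyElim a
  obtain ⟨i, hi⟩ := exists_card_sub_two_le_degree h
  by_cases hall : ∀ j, j ≠ i → G.Adj i j
  · exact Or.inl (eq_top_of_forall_adj hG hall)
  push Not at hall
  obtain ⟨m, hmi, him⟩ := hall
  exact Or.inr ⟨m, adj_iff_of_forall_adj_of_not_adj hG hmi him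
    (forall_adj_of_card_sub_two_le_degree hmi him hi)⟩

theorem card_edgeFinset_of_adj_iff {m : V}
    (h : ∀ a b, G.Adj a b ↔ a ≠ b ∧ a ≠ m ∧ b ≠ m) :
    #G.edgeFinset = (card V - 1).choose 2 := by
  have hG : G = (⊤ : SimpleGraph {x // x ≠ m}).map (Function.Embedding.subtype _) := by
    ext a b
    rw [h, map_adj]
    simp [Subtype.ext_iff]
  calc #G.edgeFinset
      = #((⊤ : SimpleGraph {x // x ≠ m}).map (Function.Embedding.subtype _)).edgeFinset := by
        congr!
    _ = (card V - 1).choose 2 := by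
        rw [card_edgeFinset_map, card_edgeFinset_top_eq_card_choose_two, card_subtype_compl,
          card_subtype_eq]

end SimpleGraph

namespace Equiv.Perm

variable {α : Type*} [DecidableEq α]

def swapGraph (X : Set (Perm α)) : SimpleGraph α where
  Adj a b := a ≠ b ∧ swap a b ∈ X
  symm := ⟨fun a b h => ⟨h.1.symm, swap_comm a b ▸ h.2⟩⟩
  loopless := ⟨fun _ h => h.1 rfl⟩

variable {X : Set (Perm α)}

theorem swapGraph_adj_trans (hX : ∀ a ∈ X, ∀ b ∈ X, a * b * a⁻¹ ∈ X) ⦃a b c : α⦄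
    (hab : (swapGraph X).Adj a b) (hbc : (swapGraph X).Adj b c) (hac : a ≠ c) :
    (swapGraph X).Adj a c := by
  refine ⟨hac, ?_⟩
  have hconj : swap a b * swap b c * (swap a b)⁻¹ = swap a c := by
    rw [← swap_apply_apply, swap_apply_right, swap_apply_of_ne_of_ne hac.symm hbc.1.symm]
  exact hconj ▸ hX _ hab.2 _ hbc.2

theorem swap_eq_swap_iff {a b c d : α} (hab : a ≠ b) (hcd : c ≠ d) :
    swap a b = swap c d ↔ s(a, b) = s(c, d) := by
  refine ⟨fun h => ?_, fun h => ?_⟩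
  · have hmoved (x : α) : x = a ∨ x = b ↔ x = c ∨ x = d := by
      simpa [swap_apply_ne_self_iff, hab, hcd] using congrArg (fun σ : Perm α => σ x ≠ x) h
    exact Sym2.eq_iff.2 (Set.pair_eq_pair_iff.1 (Set.ext hmoved))
  · rcases Sym2.eq_iff.1 h with ⟨rfl, rfl⟩ | ⟨rfl, rfl⟩
    · rfl
    · exact swap_comm a b

theorem mem_iff_exists_swapGraph_adj (hXC : ∀ σ ∈ X, σ.IsSwap) {σ : Perm α} :
    σ ∈ X ↔ ∃ a b, (swapGraph X).Adj a b ∧ swap a b = σ := by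
  refine ⟨fun hσ => ?_, fun ⟨a, b, hab, hσ⟩ => hσ ▸ hab.2⟩
  obtain ⟨a, b, hab, rfl⟩ := hXC σ hσ
  exact ⟨a, b, ⟨hab, hσ⟩, rfl⟩

theorem ncard_eq_card_edgeFinset_swapGraph [Fintype α] [DecidableRel (swapGraph X).Adj]
    (hXC : ∀ σ ∈ X, σ.IsSwap) : X.ncard = #(swapGraph X).edgeFinset := by
  let f : Sym2 α → Perm α := Sym2.lift ⟨swap, swap_comm⟩
  have himage : f '' (swapGraph X).edgeSet = X := by
    ext σ
    simp only [Set.mem_image, mem_iff_exists_swapGraph_adj hXC]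
    constructor
    · rintro ⟨e, he, rfl⟩
      induction e with | h a b => exact ⟨a, b, he, rfl⟩
    · rintro ⟨a, b, hab, rfl⟩
      exact ⟨s(a, b), hab, rfl⟩
  have hinj : Set.InjOn f (swapGraph X).edgeSet := by
    rintro ⟨a, b⟩ hab ⟨c, d⟩ hcd h
    exact (swap_eq_swap_iff hab.1 hcd.1).1 h
  calc X.ncard = (f '' (swapGraph X).edgeSet).ncard := by rw [himage]
    _ = #(swapGraph X).edgeFinset := by
      rw [hinj.ncard_image, ← SimpleGraph.coe_edgeFinset, Set.ncard_coe_finset]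

theorem eq_setOf_isSwap_of_swapGraph_eq_top (hXC : ∀ σ ∈ X, σ.IsSwap)
    (h : swapGraph X = ⊤) : X = {σ | σ.IsSwap} := by
  ext σ
  rw [mem_iff_exists_swapGraph_adj hXC, h]
  simp [IsSwap, eq_comm]

theorem eq_setOf_isSwap_apply_eq_self (hXC : ∀ σ ∈ X, σ.IsSwap) {m : α}
    (h : ∀ a b, (swapGraph X).Adj a b ↔ a ≠ b ∧ a ≠ m ∧ b ≠ m) :
    X = {σ | σ.IsSwap ∧ σ m = m} := by
  ext σ
  simp_rw [mem_iff_exists_swapGraph_adj hXC, h]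
  constructor
  · rintro ⟨a, b, ⟨hab, ham, hbm⟩, rfl⟩
    exact ⟨⟨a, b, hab, rfl⟩, swap_apply_of_ne_of_ne ham.symm hbm.symm⟩
  · rintro ⟨⟨a, b, hab, rfl⟩, hm⟩
    have hmab : ¬(m = a ∨ m = b) := fun h => swap_apply_ne_self_iff.2 ⟨hab, h⟩ hm
    push Not at hmab
    exact ⟨a, b, ⟨hab, hmab.1.symm, hmab.2.symm⟩, rfl⟩

end Equiv.Perm

theorem stmt_10_general (N : ℕ) (X : Set (Perm (Fin N)))
    (hXC : ∀ a ∈ X, a.IsSwap)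
    (hX : ∀ a ∈ X, ∀ b ∈ X, a * b * a⁻¹ ∈ X)
    (hcard : (N - 1) * (N - 2) / 2 ≤ X.ncard) :
    X = {σ : Perm (Fin N) | σ.IsSwap} ∨
      ∃ i : Fin N, X = {σ : Perm (Fin N) | σ.IsSwap ∧ σ i = i} ∧
        X.ncard = (N - 1) * (N - 2) / 2 := by
  classical
  have hncard := Perm.ncard_eq_card_edgeFinset_swapGraph hXC
  have hchoose : (N - 1) * (N - 2) / 2 = (Fintype.card (Fin N) - 1).choose 2 := by
    rw [Fintype.card_fin, Nat.choose_two_right, Nat.sub_sub]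
  rw [hncard, hchoose] at hcard
  rcases (Perm.swapGraph X).eq_top_or_exists_adj_iff (Perm.swapGraph_adj_trans hX) hcard
    with htop | ⟨m, hm⟩
  · exact Or.inl (Perm.eq_setOf_isSwap_of_swapGraph_eq_top hXC htop)
  · exact Or.inr ⟨m, Perm.eq_setOf_isSwap_apply_eq_self hXC hm,
      by rw [hncard, hchoose, SimpleGraph.card_edgeFinset_of_adj_iff hm]⟩

/-- A subset `X` of the transpositions of `S_N` (`N ≥ 3`), closed under
conjugation by its own elements and of cardinality at least `(N−1)(N−2)/2`, is
either all of `C` or the set of transpositions avoiding some fixed point `i`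
(in which case `|X| = (N−1)(N−2)/2`). -/
theorem stmt_10 (N : ℕ) (hN : 3 ≤ N) (X : Set (Perm (Fin N)))
    (hXC : ∀ a ∈ X, a.IsSwap)
    (hX : ∀ a ∈ X, ∀ b ∈ X, a * b * a⁻¹ ∈ X)
    (hcard : (N - 1) * (N - 2) / 2 ≤ X.ncard) :
    X = {σ : Perm (Fin N) | σ.IsSwap} ∨
      ∃ i : Fin N, X = {σ : Perm (Fin N) | σ.IsSwap ∧ σ i = i} ∧
        X.ncard = (N - 1) * (N - 2) / 2 :=
  stmt_10_general N X hXC hX hcard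
end

section
/- For distinct transpositions a = (ij), b = (km) in S_N: the number of transpositions c ∈ C commuting with the product ab equals C(N,2) if a = b, equals C(N−4,2) + 2 if {i,j} and {k,m} are disjoint, and equals C(N−3,2) if {i,j} and {k,m} share exactly one element. -/
/-!
A transposition `(x y)` commutes with `σ` iff `σ` preserves `{x, y}`, i.e. either fixes both
points or swaps them. The former are the transpositions of the fixed points of `σ`, the latter
the 2-cycles of `σ`, so the count is `C(#fixed points, 2)` plus the number of `2`s in the cycle
type of `σ`. According to the size of `{i, j} ∩ {p, q}`, the product `(i j)(p q)` is the
identity, a product of two disjoint transpositions, or a 3-cycle.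
-/

open Equiv Finset

namespace Equiv.Perm

variable {α : Type*} [DecidableEq α]

theorem swap_eq_swap_iff_s12 {x y u v : α} (hxy : x ≠ y) :
    swap x y = swap u v ↔ x = u ∧ y = v ∨ x = v ∧ y = u := by
  refine ⟨fun h => ?_, ?_⟩
  · have hx := congr($h x)
    rw [swap_apply_left, swap_apply_def] at hx
    split_ifs at hx <;> grind
  · rintro (⟨rfl, rfl⟩ | ⟨rfl, rfl⟩)
    · rfl
    · exact swap_comm _ _

theorem commute_swap_iff {σ : Perm α} {x y : α} (hxy : x ≠ y) :
    Commute (swap x y) σ ↔ σ x = x ∧ σ y = y ∨ σ x = y ∧ σ y = x := by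
  have hconj : Commute (swap x y) σ ↔ swap (σ x) (σ y) = swap x y := by
    rw [swap_apply_apply, mul_inv_eq_iff_eq_mul, eq_comm]
    rfl
  rw [hconj, swap_eq_swap_iff_s12 (σ.injective.ne hxy)]

theorem swap_eq_swap_of_card_inter_eq_two {i j p q : α} (hij : i ≠ j) (hpq : p ≠ q)
    (h : #({i, j} ∩ {p, q}) = 2) : swap i j = swap p q := by
  by_cases hip : i = p <;> by_cases hiq : i = q <;> by_cases hjp : j = p <;> by_cases hjq : j = q <;>
    subst_vars <;> simp_all [swap_comm]

variable [Fintype α]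

theorem IsSwap.eq_of_support_eq {c d : Perm α} (hc : c.IsSwap) (hd : d.IsSwap)
    (h : c.support = d.support) : c = d := by
  obtain ⟨x, y, hxy, rfl⟩ := hc
  obtain ⟨u, v, huv, rfl⟩ := hd
  rw [support_swap hxy, support_swap huv, ← coe_inj, coe_pair, coe_pair,
    Set.pair_eq_pair_iff] at h
  exact (swap_eq_swap_iff_s12 hxy).mpr h

theorem ncard_isSwap_support_subset (T : Finset α) :
    {c : Perm α | c.IsSwap ∧ c.support ⊆ T}.ncard = (#T).choose 2 := by
  have hinj : Set.InjOn support {c : Perm α | c.IsSwap ∧ c.support ⊆ T} :=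
    fun c hc d hd => hc.1.eq_of_support_eq hd.1
  rw [← card_powersetCard, ← Set.ncard_coe_finset, ← hinj.ncard_image]
  congr 1
  ext s
  simp only [Set.mem_image, Set.mem_ofPred, mem_coe, mem_powersetCard]
  constructor
  · rintro ⟨c, ⟨hc, hcT⟩, rfl⟩
    exact ⟨hcT, card_support_eq_two.mpr hc⟩
  · rintro ⟨hsT, hs⟩
    obtain ⟨x, y, hxy, rfl⟩ := card_eq_two.mp hs
    exact ⟨swap x y, ⟨⟨x, y, hxy, rfl⟩, by rwa [support_swap hxy]⟩, support_swap hxy⟩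

theorem swap_support_subset_compl_support_iff {σ : Perm α} {x y : α} (hxy : x ≠ y) :
    (swap x y).support ⊆ σ.supportᶜ ↔ σ x = x ∧ σ y = y := by
  simp [support_swap hxy, insert_subset_iff]

theorem swap_mem_cycleFactorsFinset_iff {σ : Perm α} {x y : α} (hxy : x ≠ y) :
    swap x y ∈ σ.cycleFactorsFinset ↔ σ x = y ∧ σ y = x := by
  simp [mem_cycleFactorsFinset_iff, IsSwap.isCycle ⟨x, y, hxy, rfl⟩, support_swap hxy, or_imp,
    forall_and, eq_comm]

theorem count_two_cycleType (σ : Perm α) :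
    σ.cycleType.count 2 = #{c ∈ σ.cycleFactorsFinset | #c.support = 2} := by
  simp only [cycleType_def, Multiset.count_map, Function.comp_apply, eq_comm (a := 2)]
  rfl

theorem ncard_isSwap_commute (σ : Perm α) :
    {c : Perm α | c.IsSwap ∧ Commute c σ}.ncard =
      (Fintype.card α - #σ.support).choose 2 + σ.cycleType.count 2 := by
  have hsplit : {c : Perm α | c.IsSwap ∧ Commute c σ} =
      {c | c.IsSwap ∧ c.support ⊆ σ.supportᶜ} ∪ ↑{c ∈ σ.cycleFactorsFinset | #c.support = 2} := by
    ext c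
    simp only [Set.mem_union, Set.mem_ofPred, mem_coe, mem_filter, card_support_eq_two]
    constructor
    · rintro ⟨hc, hcomm⟩
      obtain ⟨x, y, hxy, rfl⟩ := id hc
      rw [commute_swap_iff hxy, ← swap_support_subset_compl_support_iff hxy,
        ← swap_mem_cycleFactorsFinset_iff hxy] at hcomm
      tauto
    · rintro (⟨hc, hsub⟩ | ⟨hmem, hc⟩) <;> obtain ⟨x, y, hxy, rfl⟩ := hc <;>
        refine ⟨⟨x, y, hxy, rfl⟩, (commute_swap_iff hxy).mpr ?_⟩
      · exact .inl ((swap_support_subset_compl_support_iff hxy).mp hsub)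
      · exact .inr ((swap_mem_cycleFactorsFinset_iff hxy).mp hmem)
  have hdisj : _root_.Disjoint {c : Perm α | c.IsSwap ∧ c.support ⊆ σ.supportᶜ}
      ↑{c ∈ σ.cycleFactorsFinset | #c.support = 2} := by
    refine Set.disjoint_left.mpr fun c ⟨hc, hsub⟩ hmem => ?_
    obtain ⟨x, hx⟩ := card_pos.mp (card_support_eq_two.mpr hc ▸ two_pos : 0 < #c.support)
    exact mem_compl.mp (hsub hx) (mem_cycleFactorsFinset_support_le (mem_filter.mp hmem).1 hx)
  rw [hsplit, Set.ncard_union_eq hdisj, ncard_isSwap_support_subset, Set.ncard_coe_finset,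
    card_compl, count_two_cycleType]

theorem ncard_isSwap_commute_one :
    {c : Perm α | c.IsSwap ∧ Commute c 1}.ncard = (Fintype.card α).choose 2 := by
  rw [ncard_isSwap_commute]
  simp

theorem IsThreeCycle.ncard_isSwap_commute {σ : Perm α} (hσ : σ.IsThreeCycle) :
    {c : Perm α | c.IsSwap ∧ Commute c σ}.ncard = (Fintype.card α - 3).choose 2 := by
  rw [Perm.ncard_isSwap_commute, hσ.card_support, hσ.cycleType]
  simp

theorem Disjoint.ncard_isSwap_commute_mul {a b : Perm α} (ha : a.IsSwap) (hb : b.IsSwap)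
    (hab : a.Disjoint b) :
    {c : Perm α | c.IsSwap ∧ Commute c (a * b)}.ncard = (Fintype.card α - 4).choose 2 + 2 := by
  rw [Perm.ncard_isSwap_commute, ← sum_cycleType, hab.cycleType_mul, isSwap_iff_cycleType.mp ha,
    isSwap_iff_cycleType.mp hb]
  simp

theorem disjoint_swap_swap_of_card_inter_eq_zero {i j p q : α} (hij : i ≠ j) (hpq : p ≠ q)
    (h : #({i, j} ∩ {p, q}) = 0) : (swap i j).Disjoint (swap p q) := by
  rwa [disjoint_iff_disjoint_support, support_swap hij, support_swap hpq,
    Finset.disjoint_iff_inter_eq_empty, ← card_eq_zero]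

theorem isThreeCycle_swap_mul_swap_of_card_inter_eq_one {i j p q : α} (hij : i ≠ j) (hpq : p ≠ q)
    (h : #({i, j} ∩ {p, q}) = 1) : (swap i j * swap p q).IsThreeCycle := by
  -- in each case, move the shared point to the front of both transpositions
  by_cases hip : i = p <;> by_cases hiq : i = q <;> by_cases hjp : j = p <;> by_cases hjq : j = q <;>
    subst_vars <;> simp_all <;>
    first
    | apply isThreeCycle_swap_mul_swap_same
    | rw [swap_comm p q]; apply isThreeCycle_swap_mul_swap_same
    | rw [swap_comm i p]; apply isThreeCycle_swap_mul_swap_same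
    | rw [swap_comm i q, swap_comm p q]; apply isThreeCycle_swap_mul_swap_same
  all_goals grind

end Equiv.Perm

/-- The braided-Killing form for the 2-cycle class on `S_N`: the number of
transpositions `c` commuting with `(ij)(km)` is `C(N,2)` when `(ij) = (km)`,
`C(N−4,2) + 2` when `{i,j}` and `{k,m}` are disjoint, and `C(N−3,2)` when they
share exactly one point. -/
theorem stmt_12 (N : ℕ) (i j p q : Fin N) (hij : i ≠ j) (hpq : p ≠ q) :
    ((({i, j} : Finset (Fin N)) ∩ {p, q}).card = 2 →
      {c : Perm (Fin N) | c.IsSwap ∧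
        Commute c (Equiv.swap i j * Equiv.swap p q)}.ncard = Nat.choose N 2) ∧
    ((({i, j} : Finset (Fin N)) ∩ {p, q}).card = 0 →
      {c : Perm (Fin N) | c.IsSwap ∧
        Commute c (Equiv.swap i j * Equiv.swap p q)}.ncard = Nat.choose (N - 4) 2 + 2) ∧
    ((({i, j} : Finset (Fin N)) ∩ {p, q}).card = 1 →
      {c : Perm (Fin N) | c.IsSwap ∧
        Commute c (Equiv.swap i j * Equiv.swap p q)}.ncard = Nat.choose (N - 3) 2) := by
  refine ⟨fun h => ?_, fun h => ?_, fun h => ?_⟩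
  · rw [← Perm.swap_eq_swap_of_card_inter_eq_two hij hpq h, swap_mul_self,
      Perm.ncard_isSwap_commute_one, Fintype.card_fin]
  · rw [(Perm.disjoint_swap_swap_of_card_inter_eq_zero hij hpq h).ncard_isSwap_commute_mul
      ⟨i, j, hij, rfl⟩ ⟨p, q, hpq, rfl⟩, Fintype.card_fin]
  · rw [(Perm.isThreeCycle_swap_mul_swap_of_card_inter_eq_one hij hpq h).ncard_isSwap_commute,
      Fintype.card_fin]
end

section
/- In the Fomin-Kirillov algebra E_3 (generators [12], [23], [31] with [ij] = −[ji], relations [ij]² = 0 and [12][23] + [23][31] + [31][12] = 0 and [23][12] + [31][23] + [12][31] = 0), the element Top = [12][23][12][31] is nonzero and spans the top degree (degree 4) component, and every product of a degree-1 generator with a degree-4 element is zero. -/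
/-- The defining relations of the Fomin-Kirillov algebra `E_3`, on generators
`x 0 = [12]`, `x 1 = [23]`, `x 2 = [31]`: each generator squares to zero,
`[12][23] + [23][31] + [31][12] = 0` and `[23][12] + [31][23] + [12][31] = 0`. -/
def E3rel (k : Type) [Field k] : FreeAlgebra k (Fin 3) → FreeAlgebra k (Fin 3) → Prop :=
  fun x y =>
    (∃ a : Fin 3, x = FreeAlgebra.ι k a * FreeAlgebra.ι k a ∧ y = 0) ∨
    (x = FreeAlgebra.ι k 0 * FreeAlgebra.ι k 1 + FreeAlgebra.ι k 1 * FreeAlgebra.ι k 2 +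
          FreeAlgebra.ι k 2 * FreeAlgebra.ι k 0 ∧ y = 0) ∨
    (x = FreeAlgebra.ι k 1 * FreeAlgebra.ι k 0 + FreeAlgebra.ι k 2 * FreeAlgebra.ι k 1 +
          FreeAlgebra.ι k 0 * FreeAlgebra.ι k 2 ∧ y = 0)

/-- The Fomin-Kirillov algebra `E_3`. -/
abbrev E3 (k : Type) [Field k] : Type := RingQuot (E3rel k)

/-- The images of the generators `[12], [23], [31]` in `E_3`. -/
noncomputable def E3gen (k : Type) [Field k] (a : Fin 3) : E3 k :=
  RingQuot.mkAlgHom k (E3rel k) (FreeAlgebra.ι k a)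

/-! Write `e, f, g` for `[12], [23], [31]`. In any ring, square-zero elements satisfying the two
cyclic relations obey the rewriting rules `ge = -ef - fg`, `gf = -eg - fe` and their consequences
in degrees 3 to 5. These show that the `ℤ`-spans of the normal words `ef, fe, eg, fg`, then
`efe, efg, feg`, then `efeg` are each carried into the next by right multiplication with a
generator, and that `efeg` is killed by left multiplication with a generator. Hence
`V ^ 4 ⊆ ℤ ∙ efeg` and `V ^ 5 = 0` for `V = span {e, f, g}`. That `efeg ≠ 0` in `E_3` is witnessed
by the left regular representation of `E_3` on its normal words, written as `12 × 12` integer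
matrices. -/

open Submodule

theorem Submodule.span_mul_span_le_of_forall {S A : Type*} [CommSemiring S] [Semiring A]
    [Algebra S A] {s t : Set A} {p : Submodule S A} (h : ∀ x ∈ s, ∀ y ∈ t, x * y ∈ p) :
    span S s * span S t ≤ p := by
  rw [span_mul_span, span_le]
  exact Set.mul_subset_iff.mpr h

section

variable {R : Type*} [Ring R]

structure IsE3Triple (e f g : R) : Prop where
  sq_e : e * e = 0
  sq_f : f * f = 0
  sq_g : g * g = 0
  cyc : e * f + f * g + g * e = 0
  cyc_rev : f * e + g * f + e * g = 0

namespace IsE3Triple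

variable {e f g : R}

theorem map (h : IsE3Triple e f g) {S : Type*} [Ring S] (φ : R →+* S) :
    IsE3Triple (φ e) (φ f) (φ g) where
  sq_e := by simpa using congrArg φ h.sq_e
  sq_f := by simpa using congrArg φ h.sq_f
  sq_g := by simpa using congrArg φ h.sq_g
  cyc := by simpa using congrArg φ h.cyc
  cyc_rev := by simpa using congrArg φ h.cyc_rev

theorem ge (h : IsE3Triple e f g) : g * e = -(e * f) - f * g := by
  linear_combination (norm := noncomm_ring) h.cyc

theorem gf (h : IsE3Triple e f g) : g * f = -(e * g) - f * e := by
  linear_combination (norm := noncomm_ring) h.cyc_rev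

theorem fge (h : IsE3Triple e f g) : f * (g * e) = -(e * (f * e)) := by
  linear_combination (norm := noncomm_ring) h.cyc * e - g * h.sq_e

theorem fef (h : IsE3Triple e f g) : f * (e * f) = e * (f * e) := by
  linear_combination (norm := noncomm_ring) f * h.cyc - h.sq_f * g - h.cyc * e + g * h.sq_e

theorem ege (h : IsE3Triple e f g) : e * (g * e) = -(e * (f * g)) := by
  linear_combination (norm := noncomm_ring) e * h.cyc - h.sq_e * f

theorem egf (h : IsE3Triple e f g) : e * (g * f) = -(e * (f * e)) := by
  linear_combination (norm := noncomm_ring) e * h.cyc_rev - h.sq_e * g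

theorem fgf (h : IsE3Triple e f g) : f * (g * f) = -(f * (e * g)) := by
  linear_combination (norm := noncomm_ring) f * h.cyc_rev - h.sq_f * e

theorem efef (h : IsE3Triple e f g) : e * (f * (e * f)) = 0 := by
  linear_combination (norm := noncomm_ring) e * h.fef + h.sq_e * (f * e)

theorem efge (h : IsE3Triple e f g) : e * (f * (g * e)) = 0 := by
  linear_combination (norm := noncomm_ring) e * h.fge - h.sq_e * (f * e)

theorem efgf (h : IsE3Triple e f g) : e * (f * (g * f)) = -(e * (f * (e * g))) := by
  linear_combination (norm := noncomm_ring) e * h.fgf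

theorem fege (h : IsE3Triple e f g) : f * (e * (g * e)) = -(e * (f * (e * g))) := by
  linear_combination (norm := noncomm_ring) f * h.ege - h.fef * g

theorem fegf (h : IsE3Triple e f g) : f * (e * (g * f)) = 0 := by
  linear_combination (norm := noncomm_ring) f * h.egf - h.fef * e - (e * f) * h.sq_e

theorem e_efeg (h : IsE3Triple e f g) : e * (e * (f * (e * g))) = 0 := by
  linear_combination (norm := noncomm_ring) h.sq_e * (f * e * g)

theorem f_efeg (h : IsE3Triple e f g) : f * (e * (f * (e * g))) = 0 := by
  linear_combination (norm := noncomm_ring) h.fef * (e * g) + (e * f) * h.sq_e * g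

theorem g_efeg (h : IsE3Triple e f g) : g * (e * (f * (e * g))) = 0 := by
  linear_combination (norm := noncomm_ring) h.cyc * (f * e * g) - e * h.sq_f * (e * g) -
    h.fgf * (e * g) + f * h.ege * g - f * e * f * h.sq_g

theorem span_gens_mul_span_gens_le (h : IsE3Triple e f g) :
    span ℤ {e, f, g} * span ℤ {e, f, g} ≤ span ℤ {e * f, f * e, e * g, f * g} := by
  apply span_mul_span_le_of_forall
  simp only [Set.forall_mem_insert, Set.mem_singleton_iff, forall_eq, h.sq_e, h.sq_f, h.sq_g,
    h.ge, h.gf]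
  simp [mem_span_of_mem, sub_mem, neg_mem_iff]

theorem span_deg2_mul_span_gens_le (h : IsE3Triple e f g) :
    span ℤ {e * f, f * e, e * g, f * g} * span ℤ {e, f, g} ≤
      span ℤ {e * f * e, e * f * g, f * e * g} := by
  apply span_mul_span_le_of_forall
  simp only [Set.forall_mem_insert, Set.mem_singleton_iff, forall_eq, mul_assoc, h.sq_e, h.sq_f,
    h.sq_g, h.fef, h.ege, h.egf, h.fge, h.fgf, mul_zero]
  simp [mem_span_of_mem, neg_mem_iff]

theorem span_deg3_mul_span_gens_le (h : IsE3Triple e f g) :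
    span ℤ {e * f * e, e * f * g, f * e * g} * span ℤ {e, f, g} ≤ ℤ ∙ (e * f * e * g) := by
  apply span_mul_span_le_of_forall
  simp only [Set.forall_mem_insert, Set.mem_singleton_iff, forall_eq, mul_assoc, h.sq_e, h.sq_g,
    h.efef, h.efge, h.efgf, h.fege, h.fegf, mul_zero]
  simp [mem_span_of_mem, neg_mem_iff]

theorem span_gens_mul_span_top (h : IsE3Triple e f g) :
    span ℤ {e, f, g} * (ℤ ∙ (e * f * e * g)) = ⊥ := by
  rw [eq_bot_iff]
  apply span_mul_span_le_of_forall
  simp only [Set.forall_mem_insert, Set.mem_singleton_iff, forall_eq, mul_assoc, h.e_efeg,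
    h.f_efeg, h.g_efeg]
  simp

theorem span_gens_pow_four_le (h : IsE3Triple e f g) :
    span ℤ {e, f, g} ^ 4 ≤ ℤ ∙ (e * f * e * g) := by
  simp only [pow_succ, pow_zero, one_mul]
  calc _ ≤ span ℤ {e * f, f * e, e * g, f * g} * span ℤ {e, f, g} * span ℤ {e, f, g} :=
        mul_le_mul_left (mul_le_mul_left h.span_gens_mul_span_gens_le _) _
    _ ≤ span ℤ {e * f * e, e * f * g, f * e * g} * span ℤ {e, f, g} :=
        mul_le_mul_left h.span_deg2_mul_span_gens_le _
    _ ≤ _ := h.span_deg3_mul_span_gens_le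

theorem span_gens_pow_five (h : IsE3Triple e f g) : span ℤ {e, f, g} ^ 5 = ⊥ := by
  rw [eq_bot_iff, pow_succ', ← h.span_gens_mul_span_top]
  exact mul_le_mul_right h.span_gens_pow_four_le _

section Family

variable (x : Fin 3 → R)

theorem mem_span_range_three (a : Fin 3) : x a ∈ span ℤ {x 0, x 1, x 2} := by
  fin_cases a <;> exact subset_span (by simp)

theorem mul_mul_mul_mem_span_pow_four (a b c d : Fin 3) :
    x a * x b * x c * x d ∈ span ℤ {x 0, x 1, x 2} ^ 4 := by
  simp only [pow_succ, pow_zero, one_mul]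
  exact mul_mem_mul (mul_mem_mul (mul_mem_mul (mem_span_range_three x a)
    (mem_span_range_three x b)) (mem_span_range_three x c)) (mem_span_range_three x d)

variable {x}

theorem exists_mul_mul_mul_eq_zsmul (h : IsE3Triple (x 0) (x 1) (x 2)) (a b c d : Fin 3) :
    ∃ z : ℤ, x a * x b * x c * x d = z • (x 0 * x 1 * x 0 * x 2) := by
  obtain ⟨z, hz⟩ :=
    mem_span_singleton.mp (h.span_gens_pow_four_le (mul_mul_mul_mem_span_pow_four x a b c d))
  exact ⟨z, hz.symm⟩

theorem mul_mul_mul_mul_eq_zero (h : IsE3Triple (x 0) (x 1) (x 2)) (a b c d e : Fin 3) :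
    x a * (x b * x c * x d * x e) = 0 := by
  have := mul_mem_mul (mem_span_range_three x a) (mul_mul_mul_mem_span_pow_four x b c d e)
  rwa [← pow_succ', h.span_gens_pow_five, mem_bot] at this

end Family

end IsE3Triple

end

theorem isE3Triple_E3gen (k : Type) [Field k] :
    IsE3Triple (E3gen k 0) (E3gen k 1) (E3gen k 2) := by
  have rel {x : FreeAlgebra k (Fin 3)} (hx : E3rel k x 0) :
      RingQuot.mkAlgHom k (E3rel k) x = 0 := by
    simpa using RingQuot.mkAlgHom_rel k hx
  constructor
  · simpa [E3gen] using rel (Or.inl ⟨0, rfl, rfl⟩)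
  · simpa [E3gen] using rel (Or.inl ⟨1, rfl, rfl⟩)
  · simpa [E3gen] using rel (Or.inl ⟨2, rfl, rfl⟩)
  · simpa [E3gen] using rel (Or.inr (Or.inl ⟨rfl, rfl⟩))
  · simpa [E3gen] using rel (Or.inr (Or.inr ⟨rfl, rfl⟩))

noncomputable def E3.lift {k : Type} [Field k] {A : Type*} [Ring A] [Algebra k A] {e f g : A}
    (h : IsE3Triple e f g) : E3 k →ₐ[k] A :=
  RingQuot.liftAlgHom k ⟨FreeAlgebra.lift k ![e, f, g], by
    rintro x y (⟨a, rfl, rfl⟩ | ⟨rfl, rfl⟩ | ⟨rfl, rfl⟩)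
    · fin_cases a <;> simp [h.sq_e, h.sq_f, h.sq_g]
    · simpa using h.cyc
    · simpa using h.cyc_rev⟩

theorem E3.lift_E3gen {k : Type} [Field k] {A : Type*} [Ring A] [Algebra k A] {e f g : A}
    (h : IsE3Triple e f g) (a : Fin 3) : E3.lift h (E3gen k a) = ![e, f, g] a := by
  simp [E3.lift, E3gen]

-- Left multiplication by `e`, `f`, `g` in the basis `1, g, f, e, fg, fe, eg, ef, feg, efg, efe,
-- efeg` of `E_3`: column `j` holds the coordinates of the generator times the `j`-th word. Entry
-- `(11, 0)` of the product for `efeg` is then the coefficient of `efeg` in `efeg · 1`.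
def leftRegE : Matrix (Fin 12) (Fin 12) ℤ :=
  !![0, 0, 0, 0, 0, 0, 0, 0, 0, 0, 0, 0;
    0, 0, 0, 0, 0, 0, 0, 0, 0, 0, 0, 0;
    0, 0, 0, 0, 0, 0, 0, 0, 0, 0, 0, 0;
    1, 0, 0, 0, 0, 0, 0, 0, 0, 0, 0, 0;
    0, 0, 0, 0, 0, 0, 0, 0, 0, 0, 0, 0;
    0, 0, 0, 0, 0, 0, 0, 0, 0, 0, 0, 0;
    0, 1, 0, 0, 0, 0, 0, 0, 0, 0, 0, 0;
    0, 0, 1, 0, 0, 0, 0, 0, 0, 0, 0, 0;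
    0, 0, 0, 0, 0, 0, 0, 0, 0, 0, 0, 0;
    0, 0, 0, 0, 1, 0, 0, 0, 0, 0, 0, 0;
    0, 0, 0, 0, 0, 1, 0, 0, 0, 0, 0, 0;
    0, 0, 0, 0, 0, 0, 0, 0, 1, 0, 0, 0]

def leftRegF : Matrix (Fin 12) (Fin 12) ℤ :=
  !![0, 0, 0, 0, 0, 0, 0, 0, 0, 0, 0, 0;
    0, 0, 0, 0, 0, 0, 0, 0, 0, 0, 0, 0;
    1, 0, 0, 0, 0, 0, 0, 0, 0, 0, 0, 0;
    0, 0, 0, 0, 0, 0, 0, 0, 0, 0, 0, 0;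
    0, 1, 0, 0, 0, 0, 0, 0, 0, 0, 0, 0;
    0, 0, 0, 1, 0, 0, 0, 0, 0, 0, 0, 0;
    0, 0, 0, 0, 0, 0, 0, 0, 0, 0, 0, 0;
    0, 0, 0, 0, 0, 0, 0, 0, 0, 0, 0, 0;
    0, 0, 0, 0, 0, 0, 1, 0, 0, 0, 0, 0;
    0, 0, 0, 0, 0, 0, 0, 0, 0, 0, 0, 0;
    0, 0, 0, 0, 0, 0, 0, 1, 0, 0, 0, 0;
    0, 0, 0, 0, 0, 0, 0, 0, 0, 1, 0, 0]

def leftRegG : Matrix (Fin 12) (Fin 12) ℤ :=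
  !![0, 0, 0, 0, 0, 0, 0, 0, 0, 0, 0, 0;
    1, 0, 0, 0, 0, 0, 0, 0, 0, 0, 0, 0;
    0, 0, 0, 0, 0, 0, 0, 0, 0, 0, 0, 0;
    0, 0, 0, 0, 0, 0, 0, 0, 0, 0, 0, 0;
    0, 0, 0, -1, 0, 0, 0, 0, 0, 0, 0, 0;
    0, 0, -1, 0, 0, 0, 0, 0, 0, 0, 0, 0;
    0, 0, -1, 0, 0, 0, 0, 0, 0, 0, 0, 0;
    0, 0, 0, -1, 0, 0, 0, 0, 0, 0, 0, 0;
    0, 0, 0, 0, -1, 0, 0, 1, 0, 0, 0, 0;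
    0, 0, 0, 0, 0, 1, -1, 0, 0, 0, 0, 0;
    0, 0, 0, 0, 0, 0, 0, 0, 0, 0, 0, 0;
    0, 0, 0, 0, 0, 0, 0, 0, 0, 0, -1, 0]

set_option maxHeartbeats 1000000 in
theorem isE3Triple_leftReg : IsE3Triple leftRegE leftRegF leftRegG :=
  ⟨by decide, by decide, by decide, by decide, by decide⟩

set_option maxHeartbeats 1000000 in
theorem leftReg_top_apply : (leftRegE * leftRegF * leftRegE * leftRegG) 11 0 = 1 := by
  decide

theorem E3gen_top_ne_zero (k : Type) [Field k] :
    E3gen k 0 * E3gen k 1 * E3gen k 0 * E3gen k 2 ≠ 0 := by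
  let φ := (Int.castRingHom k).mapMatrix (m := Fin 12)
  let ρ := E3.lift (k := k) (isE3Triple_leftReg.map φ)
  have hρ : ρ (E3gen k 0 * E3gen k 1 * E3gen k 0 * E3gen k 2) =
      φ (leftRegE * leftRegF * leftRegE * leftRegG) := by
    simp only [map_mul, ρ, E3.lift_E3gen]
    rfl
  intro hzero
  rw [hzero, map_zero] at hρ
  simpa [φ, leftReg_top_apply] using congrArg (· 11 0) hρ.symm

theorem stmt_19_general (k : Type) [Field k]
    (Top : E3 k) (hTop : Top = E3gen k 0 * E3gen k 1 * E3gen k 0 * E3gen k 2) :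
    Top ≠ 0 ∧
    (∀ a b c d : Fin 3, ∃ lam : k,
      E3gen k a * E3gen k b * E3gen k c * E3gen k d = lam • Top) ∧
    (∀ a b c d e : Fin 3,
      E3gen k a * (E3gen k b * E3gen k c * E3gen k d * E3gen k e) = 0) := by
  have h := isE3Triple_E3gen k
  refine ⟨hTop ▸ E3gen_top_ne_zero k, fun a b c d => ?_, h.mul_mul_mul_mul_eq_zero⟩
  obtain ⟨z, hz⟩ := h.exists_mul_mul_mul_eq_zsmul a b c d
  exact ⟨z, hTop ▸ hz.trans (Int.cast_smul_eq_zsmul k z _).symm⟩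

/-- In `E_3`, the element `Top = [12][23][12][31]` is nonzero, every product of
four generators is a scalar multiple of `Top` (so `Top` spans the top, degree-4,
component), and every product of a generator with a product of four generators
(i.e. any degree-5 product) vanishes. -/
theorem stmt_19 (k : Type) [Field k] [CharZero k]
    (Top : E3 k) (hTop : Top = E3gen k 0 * E3gen k 1 * E3gen k 0 * E3gen k 2) :
    Top ≠ 0 ∧
    (∀ a b c d : Fin 3, ∃ lam : k,
      E3gen k a * E3gen k b * E3gen k c * E3gen k d = lam • Top) ∧
    (∀ a b c d e : Fin 3,
      E3gen k a * (E3gen k b * E3gen k c * E3gen k d * E3gen k e) = 0) :=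
  stmt_19_general k Top hTop
end
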